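/- arXiv:0901.0843 — 3 statements merged into one kernel-verified Lean document; each statement's English description precedes it below -/
import Mathlib

section
/- Let t : M ⊗ M ⟶ M ⊗ M be the twist morphism of the monoid object M. Then ((ρ_M).inv ≫ (M ◁ η)) ≫ t = (λ_M).inv ≫ (η ▷ M); that is, t ∘ (M ⋄ η) = η ⋄ M (one half of condition (2) of the definition of a twist map). -/
open CategoryTheory MonoidalCategory

/-- The Bousfield–Kan twist morphism of a monoid object `M` in a preadditive
monoidal category: `t = (μ ≫ (λ_M).inv ≫ (η ▷ M)) − 𝟙 + (μ ≫ (ρ_M).inv ≫ (M ◁ η))`. -/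
def twistMor {C : Type*} [Category C] [MonoidalCategory C] [Preadditive C]
    [MonoidalPreadditive C] (M : Mon C) : M.X ⊗ M.X ⟶ M.X ⊗ M.X :=
  (MonObj.mul (X := M.X) ≫ (λ_ M.X).inv ≫ (MonObj.one (X := M.X) ▷ M.X)) - 𝟙 (M.X ⊗ M.X) +
    (MonObj.mul (X := M.X) ≫ (ρ_ M.X).inv ≫ (M.X ◁ MonObj.one (X := M.X)))

/-- One half of condition (2) of a twist map: `t ∘ (M ⋄ η) = η ⋄ M`. -/
theorem twist_right_unit {C : Type*} [Category C] [MonoidalCategory C] [Preadditive C]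
    [MonoidalPreadditive C] (M : Mon C) :
    ((ρ_ M.X).inv ≫ (M.X ◁ MonObj.one (X := M.X))) ≫ twistMor M = (λ_ M.X).inv ≫ (MonObj.one (X := M.X) ▷ M.X) := by
  simp [twistMor, Preadditive.comp_add, Preadditive.comp_sub, MonObj.mul_one,
    reassoc_of% (MonObj.mul_one M.X)]
end

section
/- For every type X and every Ψ : K (K (K X)), one has t_X (μ_{K X} Ψ) = Finsupp.mapDomain μ_X (t_{K X} (Finsupp.mapDomain t_X Ψ)); that is, the twist map of the free R-module monad satisfies t ∘ (μ ⋄ K) = (K ⋄ μ) ∘ (t ⋄ K) ∘ (K ⋄ t) (one half of condition (3) of the definition of a twist map). -/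
noncomputable section

/-- `Keta R X` is the unit `η_X : X → K X` of the free `R`-module monad,
`x ↦ Finsupp.single x 1`. -/
def Keta (R : Type*) [Ring R] (X : Type*) : X → (X →₀ R) :=
  fun x => Finsupp.single x 1

/-- `Kmu R X : K (K X) → K X` is the multiplication `μ_X` of the free `R`-module
monad, the `R`-linear extension of the identity of `K X`. -/
def Kmu (R : Type*) [Ring R] (X : Type*) : ((X →₀ R) →₀ R) → (X →₀ R) :=
  fun Φ => Φ.sum fun g a => a • g

/-- The Bousfield–Kan twist map `t_X : K (K X) → K (K X)` of the free `R`-module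
monad: `t_X Φ = η_{K X} (μ_X Φ) − Φ + (K η_X) (μ_X Φ)`. -/
def Ktw (R : Type*) [Ring R] (X : Type*) : ((X →₀ R) →₀ R) → ((X →₀ R) →₀ R) :=
  fun Φ => Finsupp.single (Kmu R X Φ) 1 - Φ + Finsupp.mapDomain (Keta R X) (Kmu R X Φ)


section helpers
variable {R : Type*} [Ring R] {X Y : Type*}

lemma Kmu_eq_total :
    Kmu R X = ⇑(Finsupp.linearCombination R (_root_.id : (X →₀ R) → (X →₀ R))) := rfl

lemma Kmu_single (g : X →₀ R) (r : R) : Kmu R X (Finsupp.single g r) = r • g := by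
  rw [Kmu_eq_total, Finsupp.linearCombination_single]; rfl

lemma Kmu_add (u v : (X →₀ R) →₀ R) : Kmu R X (u + v) = Kmu R X u + Kmu R X v := by
  rw [Kmu_eq_total]; exact map_add _ u v

lemma Kmu_sub (u v : (X →₀ R) →₀ R) : Kmu R X (u - v) = Kmu R X u - Kmu R X v := by
  rw [Kmu_eq_total]; exact map_sub _ u v

lemma Kmu_mapDomain (f : Y → (X →₀ R)) (Φ : Y →₀ R) :
    Kmu R X (Finsupp.mapDomain f Φ) = Φ.sum fun b a => a • f b := by
  rw [Kmu_eq_total, Finsupp.linearCombination_mapDomain, Finsupp.linearCombination_apply]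
  rfl

lemma Kmu_mapDomain_eta (v : X →₀ R) :
    Kmu R X (Finsupp.mapDomain (Keta R X) v) = v := by
  rw [Kmu_mapDomain]
  simp only [Keta, Finsupp.smul_single', mul_one]
  exact Finsupp.sum_single v

lemma mapDomain_sub' {Z : Type*} (f : Y → Z) (u v : Y →₀ R) :
    Finsupp.mapDomain f (u - v) = Finsupp.mapDomain f u - Finsupp.mapDomain f v :=
  map_sub (Finsupp.mapDomain.addMonoidHom f) u v

lemma Kmu_Ktw (Φ : (X →₀ R) →₀ R) : Kmu R X (Ktw R X Φ) = Kmu R X Φ := by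
  rw [Ktw, Kmu_add, Kmu_sub, Kmu_single, Kmu_mapDomain_eta, one_smul]
  abel

end helpers

/-- One half of condition (3) of a twist map for the free `R`-module monad:
`t ∘ (μ ⋄ K) = (K ⋄ μ) ∘ (t ⋄ K) ∘ (K ⋄ t)`. -/
theorem Ktw_mu_left (R : Type*) [Ring R] (X : Type*) (Ψ : (((X →₀ R) →₀ R) →₀ R)) :
    Ktw R X (Kmu R (X →₀ R) Ψ) =
      Finsupp.mapDomain (Kmu R X) (Ktw R (X →₀ R) (Finsupp.mapDomain (Ktw R X) Ψ)) := by
  classical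
  set A := Kmu R (X →₀ R) Ψ with hA
  set a := Kmu R X A with ha
  have ha' : a = Ψ.sum fun b r => r • Kmu R X b := by
    rw [ha, hA]
    show Kmu R X (Ψ.sum fun b r => r • b) = _
    rw [Kmu_eq_total, map_finsuppSum]
    simp [Kmu_eq_total]
  have hmu' : Kmu R (X →₀ R) (Finsupp.mapDomain (Ktw R X) Ψ)
      = Finsupp.mapDomain (Kmu R X) Ψ - A + Finsupp.mapDomain (Keta R X) a := by
    rw [Kmu_mapDomain]
    have key : ∀ (b : (X →₀ R) →₀ R) (r : R), r • Ktw R X b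
        = (Finsupp.single (Kmu R X b) r - r • b) + Finsupp.mapDomain (Keta R X) (r • Kmu R X b) := by
      intro b r
      rw [Ktw, smul_add, smul_sub, Finsupp.smul_single', mul_one, Finsupp.mapDomain_smul]
    have hsplit : (Ψ.sum fun b r => r • Ktw R X b)
        = Ψ.sum (fun b r => (Finsupp.single (Kmu R X b) r - r • b)
            + Finsupp.mapDomain (Keta R X) (r • Kmu R X b)) :=
      Finsupp.sum_congr fun b _ => key b (Ψ b)
    have e1 : (Ψ.sum fun b r => (Finsupp.single (Kmu R X b) r : (X →₀ R) →₀ R))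
        = Finsupp.mapDomain (Kmu R X) Ψ := by rw [Finsupp.mapDomain]
    have e2 : (Ψ.sum fun b r => r • b) = A := rfl
    have e3 : (Ψ.sum fun b r => Finsupp.mapDomain (Keta R X) (r • Kmu R X b))
        = Finsupp.mapDomain (Keta R X) a := by
      rw [ha']
      exact (map_finsuppSum (Finsupp.mapDomain.addMonoidHom (Keta R X)) Ψ
        (fun b r => r • Kmu R X b)).symm
    rw [hsplit, Finsupp.sum_add, Finsupp.sum_sub, e1, e2, e3]
  conv_rhs => rw [Ktw]
  rw [hmu', Finsupp.mapDomain_add, mapDomain_sub', Finsupp.mapDomain_single]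
  have h1 : Kmu R X (Finsupp.mapDomain (Kmu R X) Ψ - A + Finsupp.mapDomain (Keta R X) a) = a := by
    rw [Kmu_add, Kmu_sub, Kmu_mapDomain_eta, Kmu_mapDomain, ← ha']
    abel
  rw [h1]
  have h2 : Finsupp.mapDomain (Kmu R X) (Finsupp.mapDomain (Ktw R X) Ψ)
      = Finsupp.mapDomain (Kmu R X) Ψ := by
    rw [← Finsupp.mapDomain_comp]
    exact Finsupp.mapDomain_congr fun b _ => Kmu_Ktw b
  rw [h2]
  have h3 : Finsupp.mapDomain (Kmu R X)
      (Finsupp.mapDomain (Keta R (X →₀ R))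
        (Finsupp.mapDomain (Kmu R X) Ψ - A + Finsupp.mapDomain (Keta R X) a))
      = Finsupp.mapDomain (Kmu R X) Ψ - A + Finsupp.mapDomain (Keta R X) a := by
    rw [← Finsupp.mapDomain_comp]
    have hid : (Kmu R X ∘ Keta R (X →₀ R)) = _root_.id := by
      funext g
      simp [Function.comp, Keta, Kmu_single]
    rw [hid, Finsupp.mapDomain_id]
  rw [h3, Ktw]
  abel
end
end

section
/- The map t is a twist map for the free R-module monad K, i.e. for every type X: (1) μ_X ∘ t_X = μ_X; (2) for every f : K X, t_X (Finsupp.mapDomain η_X f) = Finsupp.single f 1 and t_X (Finsupp.single f 1) = Finsupp.mapDomain η_X f; (3) for every Ψ : K (K (K X)), t_X (μ_{K X} Ψ) = Finsupp.mapDomain μ_X (t_{K X} (Finsupp.mapDomain t_X Ψ)) and t_X (Finsupp.mapDomain μ_X Ψ) = μ_{K X} (Finsupp.mapDomain t_X (t_{K X} Ψ)). -/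
noncomputable section

namespace KtwAux

variable (R : Type*) [Ring R] (X : Type*)

lemma Kmu_eq : Kmu R X = ⇑(Finsupp.linearCombination R (id : (X →₀ R) → (X →₀ R))) := by
  funext Φ
  simp [Kmu, Finsupp.linearCombination_apply]

lemma Kmu_add (x y : (X →₀ R) →₀ R) : Kmu R X (x + y) = Kmu R X x + Kmu R X y := by
  simp [Kmu_eq]

lemma Kmu_sub (x y : (X →₀ R) →₀ R) : Kmu R X (x - y) = Kmu R X x - Kmu R X y := by
  simp [Kmu_eq]

lemma Kmu_single (g : X →₀ R) (a : R) : Kmu R X (Finsupp.single g a) = a • g := by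
  simp [Kmu, Finsupp.sum_single_index]

lemma Kmu_mapDomain {Y : Type*} (F : Y → (X →₀ R)) (Φ : Y →₀ R) :
    Kmu R X (Finsupp.mapDomain F Φ) = Φ.sum fun y a => a • F y := by
  unfold Kmu
  exact Finsupp.sum_mapDomain_index (fun g => zero_smul R g)
    (fun g a b => add_smul a b g)

lemma Kmu_mapDomain_eta (f : X →₀ R) :
    Kmu R X (Finsupp.mapDomain (Keta R X) f) = f := by
  rw [Kmu_mapDomain]
  simp only [Keta, Finsupp.smul_single', mul_one]
  exact Finsupp.sum_single f

lemma Kmu_assoc (Ψ : ((X →₀ R) →₀ R) →₀ R) :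
    Kmu R X (Finsupp.mapDomain (Kmu R X) Ψ) = Kmu R X (Kmu R (X →₀ R) Ψ) := by
  rw [Kmu_mapDomain]
  conv_rhs => rw [Kmu_eq]
  rw [show Kmu R (X →₀ R) Ψ = Ψ.sum fun g a => a • g from rfl, map_finsuppSum]
  simp [← Kmu_eq]

lemma mapDomain_eq (Ψ : ((X →₀ R) →₀ R) →₀ R) :
    Finsupp.mapDomain (Kmu R X) Ψ = Ψ.sum fun Φ a => a • Finsupp.single (Kmu R X Φ) 1 := by
  rw [Finsupp.mapDomain]
  simp [Finsupp.smul_single', mul_one]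

-- μ_{KX} (mapDomain t Ψ)
lemma mu_mapDomain_tw (Ψ : ((X →₀ R) →₀ R) →₀ R) :
    Kmu R (X →₀ R) (Finsupp.mapDomain (Ktw R X) Ψ) =
      Finsupp.mapDomain (Kmu R X) Ψ - Kmu R (X →₀ R) Ψ
        + Finsupp.mapDomain (Keta R X) (Kmu R X (Kmu R (X →₀ R) Ψ)) := by
  rw [Kmu_mapDomain]
  simp only [Ktw, smul_add, smul_sub]
  rw [Finsupp.sum, Finset.sum_add_distrib, Finset.sum_sub_distrib]
  congr 1
  · congr 1
    rw [mapDomain_eq, Finsupp.sum]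
  · have hE : ∀ v : X →₀ R, Finsupp.mapDomain (Keta R X) v =
        Finsupp.lmapDomain R R (Keta R X) v := fun v => rfl
    simp only [hE, ← map_smul]
    rw [← map_sum]
    congr 1
    have := Kmu_assoc R X Ψ
    rw [Kmu_mapDomain] at this
    rw [← this, Finsupp.sum]

lemma tw_single (f : X →₀ R) :
    Ktw R X (Finsupp.single f 1) = Finsupp.mapDomain (Keta R X) f := by
  simp [Ktw, Kmu_single]

lemma tw_eta (f : X →₀ R) :
    Ktw R X (Finsupp.mapDomain (Keta R X) f) = Finsupp.single f 1 := by
  simp [Ktw, Kmu_mapDomain_eta]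

lemma mu_tw (Φ : (X →₀ R) →₀ R) : Kmu R X (Ktw R X Φ) = Kmu R X Φ := by
  simp [Ktw, Kmu_add, Kmu_sub, Kmu_single, Kmu_mapDomain_eta]

lemma Ktw_def (Φ : (X →₀ R) →₀ R) :
    Ktw R X Φ = Finsupp.single (Kmu R X Φ) 1 - Φ
      + Finsupp.mapDomain (Keta R X) (Kmu R X Φ) := rfl

lemma mapDomain_sub' {α β : Type*} (f : α → β) (x y : α →₀ R) :
    Finsupp.mapDomain f (x - y) = Finsupp.mapDomain f x - Finsupp.mapDomain f y :=
  (Finsupp.lmapDomain R R f).map_sub x y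

lemma mapDomain_mu_eta (v : (X →₀ R) →₀ R) :
    Finsupp.mapDomain (Kmu R X) (Finsupp.mapDomain (Keta R (X →₀ R)) v) = v := by
  rw [← Finsupp.mapDomain_comp]
  have h : (Kmu R X) ∘ (Keta R (X →₀ R)) = id := by
    funext g
    simp [Keta, Kmu_single]
  rw [h, Finsupp.mapDomain_id]

lemma mapDomain_mu_tw (Ψ : (((X →₀ R) →₀ R) →₀ R)) :
    Finsupp.mapDomain (Kmu R X) (Finsupp.mapDomain (Ktw R X) Ψ) =
      Finsupp.mapDomain (Kmu R X) Ψ := by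
  rw [← Finsupp.mapDomain_comp]
  congr 1
  funext Φ
  exact mu_tw R X Φ

lemma mu_tw_eta (v : (X →₀ R) →₀ R) :
    Kmu R (X →₀ R) (Finsupp.mapDomain (Ktw R X)
        (Finsupp.mapDomain (Keta R (X →₀ R)) v)) =
      Finsupp.mapDomain (Keta R X) (Kmu R X v) := by
  rw [← Finsupp.mapDomain_comp]
  have h : (Ktw R X) ∘ (Keta R (X →₀ R)) = fun g => Finsupp.mapDomain (Keta R X) g := by
    funext g
    exact tw_single R X g
  rw [h, Kmu_mapDomain]
  have hE : ∀ w : X →₀ R, Finsupp.mapDomain (Keta R X) w =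
      Finsupp.lmapDomain R R (Keta R X) w := fun w => rfl
  simp only [hE, ← map_smul]
  rw [show Kmu R X v = v.sum fun g a => a • g from rfl, map_finsuppSum]

lemma part3a (Ψ : (((X →₀ R) →₀ R) →₀ R)) :
    Ktw R X (Kmu R (X →₀ R) Ψ) =
      Finsupp.mapDomain (Kmu R X) (Ktw R (X →₀ R) (Finsupp.mapDomain (Ktw R X) Ψ)) := by
  rw [Ktw_def R (X →₀ R) (Finsupp.mapDomain (Ktw R X) Ψ)]
  rw [Finsupp.mapDomain_add, mapDomain_sub', Finsupp.mapDomain_single,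
    mapDomain_mu_eta, mapDomain_mu_tw]
  have hsingle : Kmu R X (Kmu R (X →₀ R) (Finsupp.mapDomain (Ktw R X) Ψ)) =
      Kmu R X (Kmu R (X →₀ R) Ψ) := by
    rw [← Kmu_assoc, mapDomain_mu_tw, Kmu_assoc]
  rw [hsingle, mu_mapDomain_tw, Ktw_def]
  abel

lemma part3b (Ψ : (((X →₀ R) →₀ R) →₀ R)) :
    Ktw R X (Finsupp.mapDomain (Kmu R X) Ψ) =
      Kmu R (X →₀ R) (Finsupp.mapDomain (Ktw R X) (Ktw R (X →₀ R) Ψ)) := by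
  rw [Ktw_def R (X →₀ R) Ψ]
  rw [Finsupp.mapDomain_add, mapDomain_sub', Finsupp.mapDomain_single,
    Kmu_add, Kmu_sub, Kmu_single, one_smul, mu_mapDomain_tw, mu_tw_eta,
    Ktw_def R X (Kmu R (X →₀ R) Ψ), Ktw_def R X (Finsupp.mapDomain (Kmu R X) Ψ),
    Kmu_assoc]
  abel

end KtwAux


open KtwAux in
/-- `t` is a twist map for the free `R`-module monad `K`: conditions (1), (2)
and (3) of the definition of a twist map hold. -/
theorem Ktw_is_twist_map (R : Type*) [Ring R] (X : Type*) :
    (∀ Φ : (X →₀ R) →₀ R, Kmu R X (Ktw R X Φ) = Kmu R X Φ) ∧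
    (∀ f : X →₀ R,
      Ktw R X (Finsupp.mapDomain (Keta R X) f) = Finsupp.single f 1 ∧
      Ktw R X (Finsupp.single f 1) = Finsupp.mapDomain (Keta R X) f) ∧
    (∀ Ψ : (((X →₀ R) →₀ R) →₀ R),
      Ktw R X (Kmu R (X →₀ R) Ψ) =
        Finsupp.mapDomain (Kmu R X) (Ktw R (X →₀ R) (Finsupp.mapDomain (Ktw R X) Ψ)) ∧
      Ktw R X (Finsupp.mapDomain (Kmu R X) Ψ) =
        Kmu R (X →₀ R) (Finsupp.mapDomain (Ktw R X) (Ktw R (X →₀ R) Ψ))) := by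
  exact ⟨mu_tw R X, fun f => ⟨tw_eta R X f, tw_single R X f⟩,
    fun Ψ => ⟨part3a R X Ψ, part3b R X Ψ⟩⟩
end
end
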